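/- On the open set U = {(x,y) ∈ ℝ² : x² < 2 and y² < 2}, the square-to-disk deformation map F(x,y) = (x·√(1 − y²/2), y·√(1 − x²/2)) is differentiable, and the determinant of its total derivative at (x,y) equals (1 − (x² + y²)/2) / √((1 − x²/2)(1 − y²/2)). -/

import Mathlib

noncomputable def squareToDisk : ℝ × ℝ → ℝ × ℝ := fun p =>
  (p.1 * Real.sqrt (1 - p.2 ^ 2 / 2), p.2 * Real.sqrt (1 - p.1 ^ 2 / 2))

/-- On the open set `{(x,y) : x² < 2 and y² < 2}`, the square-to-disk map is
differentiable, and its Jacobian determinant at `(x,y)` equals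
`(1 − (x² + y²)/2) / √((1 − x²/2)(1 − y²/2))`. -/
theorem squareToDisk_differentiable_and_jacobian (x y : ℝ) (hx : x ^ 2 < 2) (hy : y ^ 2 < 2) :
    DifferentiableAt ℝ squareToDisk (x, y) ∧
    (fderiv ℝ squareToDisk (x, y)).det =
      (1 - (x ^ 2 + y ^ 2) / 2) / Real.sqrt ((1 - x ^ 2 / 2) * (1 - y ^ 2 / 2)) := by
  have hA : (0:ℝ) < 1 - x ^ 2 / 2 := by linarith
  have hB : (0:ℝ) < 1 - y ^ 2 / 2 := by linarith
  set a := Real.sqrt (1 - x ^ 2 / 2) with ha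
  set b := Real.sqrt (1 - y ^ 2 / 2) with hb
  have ha0 : 0 < a := Real.sqrt_pos.2 hA
  have hb0 : 0 < b := Real.sqrt_pos.2 hB
  have ha2 : a ^ 2 = 1 - x ^ 2 / 2 := Real.sq_sqrt hA.le
  have hb2 : b ^ 2 = 1 - y ^ 2 / 2 := Real.sq_sqrt hB.le
  -- scalar derivatives
  have hgy : HasDerivAt (fun t : ℝ => 1 - t ^ 2 / 2) (-y) y := by
    have h := ((hasDerivAt_pow 2 y).div_const 2).const_sub 1
    norm_num at h
    exact h
  have hgx : HasDerivAt (fun t : ℝ => 1 - t ^ 2 / 2) (-x) x := by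
    have h := ((hasDerivAt_pow 2 x).div_const 2).const_sub 1
    norm_num at h
    exact h
  have hsy : HasDerivAt (fun t : ℝ => Real.sqrt (1 - t ^ 2 / 2)) (1 / (2 * b) * -y) y := by
    have hsq : HasDerivAt Real.sqrt (1 / (2 * b)) (1 - y ^ 2 / 2) := by
      simpa [hb] using Real.hasDerivAt_sqrt (x := 1 - y ^ 2 / 2) (by positivity)
    exact hsq.comp y hgy
  have hsx : HasDerivAt (fun t : ℝ => Real.sqrt (1 - t ^ 2 / 2)) (1 / (2 * a) * -x) x := by
    have hsq : HasDerivAt Real.sqrt (1 / (2 * a)) (1 - x ^ 2 / 2) := by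
      simpa [ha] using Real.hasDerivAt_sqrt (x := 1 - x ^ 2 / 2) (by positivity)
    exact hsq.comp x hgx
  have hs2 : HasFDerivAt (fun p : ℝ × ℝ => Real.sqrt (1 - p.2 ^ 2 / 2))
      ((1 / (2 * b) * -y) • ContinuousLinearMap.snd ℝ ℝ ℝ) (x, y) :=
    hsy.comp_hasFDerivAt (f := Prod.snd) (x, y) hasFDerivAt_snd
  have hs1 : HasFDerivAt (fun p : ℝ × ℝ => Real.sqrt (1 - p.1 ^ 2 / 2))
      ((1 / (2 * a) * -x) • ContinuousLinearMap.fst ℝ ℝ ℝ) (x, y) :=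
    hsx.comp_hasFDerivAt (f := Prod.fst) (x, y) hasFDerivAt_fst
  have hc1 : HasFDerivAt (fun p : ℝ × ℝ => p.1 * Real.sqrt (1 - p.2 ^ 2 / 2))
      (x • ((1 / (2 * b) * -y) • ContinuousLinearMap.snd ℝ ℝ ℝ)
        + b • ContinuousLinearMap.fst ℝ ℝ ℝ) (x, y) := by
    simpa [hb, Pi.mul_def] using (hasFDerivAt_fst (𝕜 := ℝ) (E := ℝ) (F := ℝ) (p := (x,y))).mul hs2
  have hc2 : HasFDerivAt (fun p : ℝ × ℝ => p.2 * Real.sqrt (1 - p.1 ^ 2 / 2))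
      (y • ((1 / (2 * a) * -x) • ContinuousLinearMap.fst ℝ ℝ ℝ)
        + a • ContinuousLinearMap.snd ℝ ℝ ℝ) (x, y) := by
    simpa [ha, Pi.mul_def] using (hasFDerivAt_snd (𝕜 := ℝ) (E := ℝ) (F := ℝ) (p := (x,y))).mul hs1
  have hF : HasFDerivAt squareToDisk
      ((x • ((1 / (2 * b) * -y) • ContinuousLinearMap.snd ℝ ℝ ℝ)
        + b • ContinuousLinearMap.fst ℝ ℝ ℝ).prod
       (y • ((1 / (2 * a) * -x) • ContinuousLinearMap.fst ℝ ℝ ℝ)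
        + a • ContinuousLinearMap.snd ℝ ℝ ℝ)) (x, y) := hc1.prodMk hc2
  refine ⟨hF.differentiableAt, ?_⟩
  rw [hF.fderiv]
  set L := (x • ((1 / (2 * b) * -y) • ContinuousLinearMap.snd ℝ ℝ ℝ)
        + b • ContinuousLinearMap.fst ℝ ℝ ℝ).prod
       (y • ((1 / (2 * a) * -x) • ContinuousLinearMap.fst ℝ ℝ ℝ)
        + a • ContinuousLinearMap.snd ℝ ℝ ℝ) with hL
  have hdet : L.det = b * a - (x * (1 / (2 * b) * -y)) * (y * (1 / (2 * a) * -x)) := by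
    rw [ContinuousLinearMap.det]
    rw [← LinearMap.det_toMatrix (Module.Basis.finTwoProd ℝ)]
    rw [Matrix.det_fin_two]
    simp [LinearMap.toMatrix_apply, hL, Module.Basis.finTwoProd_zero, Module.Basis.finTwoProd_one]
  rw [hdet, Real.sqrt_mul hA.le, ← ha, ← hb]
  have hab : 4 * (a ^ 2 * b ^ 2) - x ^ 2 * y ^ 2 = 4 - 2 * x ^ 2 - 2 * y ^ 2 := by
    rw [ha2, hb2]; ring
  field_simp
  linear_combination hab
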